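/- arXiv:2001.11665 — 2 statements merged into one kernel-verified Lean document; each statement's English description precedes it below -/
import Mathlib

section
/- For all integers 0 ≤ k ≤ n, the quasi-bi^s-nomial coefficient admits the multinomial explicit formula C_s(n,k) = ∑ multinomial(k; k_1, k_2, …, k_s) · C(n + k - ∑_{i=1}^{s} i·k_i, k), where the sum runs over all s-tuples (k_1,…,k_s) of natural numbers with k_1 + k_2 + ⋯ + k_s = k, multinomial(k; k_1,…,k_s) = k!/(k_1! k_2! ⋯ k_s!), and the binomial coefficient C(a,k) is taken to be 0 when the integer a is negative or less than k. -/
/-- The quasi-bi^s-nomial coefficients `C_s(n,k)`. -/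
def quasi (s : ℕ) : ℕ → ℤ → ℤ
  | 0, k => if k = 0 then 1 else 0
  | n+1, k =>
    if k < 0 ∨ (n+1 : ℤ) < k then 0
    else quasi s n k + ∑ j ∈ Finset.range s, if j ≤ n then quasi s (n - j) (k - 1) else 0
  termination_by n _ => n
  decreasing_by all_goals omega

/-- Binomial coefficient `C(a,b)` with integer upper argument, zero when `a < 0`
(and, as usual, zero when `b > a ≥ 0`). -/
def ichoose (a : ℤ) (b : ℕ) : ℤ :=
  if a < 0 then 0 else (a.toNat.choose b : ℤ)

lemma ichoose_succ (a : ℤ) (k : ℕ) :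
    ichoose a (k+1) = ichoose (a-1) (k+1) + ichoose (a-1) k := by
  unfold ichoose
  rcases lt_trichotomy a 0 with h | h | h
  · simp [h, show a - 1 < 0 by omega]
  · subst h; norm_num
  · have h1 : ¬ a < 0 := by omega
    have h2 : ¬ a - 1 < 0 := by omega
    have h3 : a.toNat = (a-1).toNat + 1 := by omega
    simp only [h1, h2, if_false, h3, Nat.choose_succ_succ]
    push_cast; ring

lemma ichoose_neg {a : ℤ} {k : ℕ} (h : a < k) : ichoose a k = 0 := by
  unfold ichoose
  split
  · rfl
  · rw [Nat.choose_eq_zero_of_lt (by omega)]; rfl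

noncomputable def W (s : ℕ) (v : Fin s → ℕ) : ℤ := ∑ i : Fin s, (((i : ℕ) : ℤ) + 1) * (v i : ℤ)

noncomputable def F (s : ℕ) (z : ℤ) (k : ℕ) : ℤ :=
  ∑ v ∈ Finset.Nat.antidiagonalTuple s k,
    (Nat.multinomial Finset.univ v : ℤ) * ichoose (z + k - W s v) k

lemma W_ge (s k : ℕ) (v : Fin s → ℕ) (hv : ∑ i, v i = k) : (k : ℤ) ≤ W s v := by
  rw [← hv]
  unfold W
  push_cast
  apply Finset.sum_le_sum
  intro i _
  nlinarith [Int.ofNat_nonneg (v i), Int.ofNat_nonneg (i : ℕ)]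

lemma F_zero (s : ℕ) (z : ℤ) : F s z 0 = ichoose z 0 := by
  unfold F
  rw [Finset.Nat.antidiagonalTuple_zero_right]
  simp [W, Nat.multinomial]

lemma F_vanish (s : ℕ) (z : ℤ) (k : ℕ) (h : z < k) : F s z k = 0 := by
  unfold F
  apply Finset.sum_eq_zero
  intro v hv
  rw [Finset.Nat.mem_antidiagonalTuple] at hv
  rw [ichoose_neg (by have := W_ge s k v hv; omega), mul_zero]

lemma sum_update_pred {s k : ℕ} (v : Fin s → ℕ) (j : Fin s) (hj : 1 ≤ v j)
    (hv : ∑ i, v i = k + 1) : ∑ i, Function.update v j (v j - 1) i = k := by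
  rw [Finset.sum_update_of_mem (Finset.mem_univ j)]
  have h2 : v j + ∑ i ∈ Finset.univ \ {j}, v i = k + 1 := by
    rw [← hv, ← Finset.sum_update_of_mem (Finset.mem_univ j)]
    exact Finset.sum_congr rfl (fun i _ => by
      by_cases h : i = j
      · subst h; simp
      · rw [Function.update_of_ne h])
  omega

open Nat in
lemma mult_rec {s k : ℕ} (v : Fin s → ℕ) (hv : ∑ i, v i = k + 1) :
    (∑ j : Fin s, if 1 ≤ v j then
        Nat.multinomial Finset.univ (Function.update v j (v j - 1)) else 0)
      = Nat.multinomial Finset.univ v := by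
  have hP : 0 < ∏ i, (v i)! := Finset.prod_pos (fun i _ => Nat.factorial_pos _)
  apply Nat.eq_of_mul_eq_mul_right hP
  have key : ∀ j : Fin s, 1 ≤ v j →
      Nat.multinomial Finset.univ (Function.update v j (v j - 1)) * ∏ i, (v i)! =
        v j * (k)! := by
    intro j hj
    set w := Function.update v j (v j - 1) with hw
    have hsum : ∑ i, w i = k := sum_update_pred v j hj hv
    have hfun : (fun i => (w i)!) = Function.update (fun i => (v i)!) j ((v j - 1)!) := by
      ext i
      by_cases h : i = j
      · subst h; simp [hw]
      · simp [hw, Function.update_of_ne h]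
    have hprod : ∏ i, (v i)! = v j * ∏ i, (w i)! := by
      rw [hfun, Finset.prod_update_of_mem (Finset.mem_univ j)]
      rw [← mul_assoc, Nat.mul_factorial_pred (by omega)]
      rw [← Finset.prod_update_of_mem (Finset.mem_univ j) (fun i => (v i)!) ((v j)!)]
      exact Finset.prod_congr rfl (fun i _ => by
        by_cases h : i = j
        · subst h; simp
        · rw [Function.update_of_ne h])
    rw [hprod, ← mul_assoc, mul_comm (Nat.multinomial Finset.univ w) (v j), mul_assoc,
      mul_comm (Nat.multinomial Finset.univ w), Nat.multinomial_spec, hsum]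
  rw [Finset.sum_mul]
  have : ∀ j : Fin s,
      (if 1 ≤ v j then Nat.multinomial Finset.univ (Function.update v j (v j - 1)) else 0)
        * ∏ i, (v i)! = v j * (k)! := by
    intro j
    by_cases h : 1 ≤ v j
    · rw [if_pos h]; exact key j h
    · rw [if_neg h, zero_mul, show v j = 0 by omega, zero_mul]
  rw [Finset.sum_congr rfl (fun j _ => this j), ← Finset.sum_mul, hv,
    mul_comm (Nat.multinomial Finset.univ v), Nat.multinomial_spec, hv]
  rw [Nat.factorial_succ]

lemma W_update {s : ℕ} (v : Fin s → ℕ) (j : Fin s) (hj : 1 ≤ v j) :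
    W s v = W s (Function.update v j (v j - 1)) + ((j : ℕ) : ℤ) + 1 := by
  have : W s v - W s (Function.update v j (v j - 1)) = ((j : ℕ) : ℤ) + 1 := by
    unfold W
    rw [← Finset.sum_sub_distrib, Finset.sum_eq_single j]
    · have h1 : ((v j - 1 : ℕ) : ℤ) = (v j : ℤ) - 1 := by omega
      simp [h1]; ring
    · intro i _ hij
      rw [Function.update_of_ne hij]; ring
    · intro h; exact absurd (Finset.mem_univ j) h
  linarith

lemma sum_update_aux {s : ℕ} (v : Fin s → ℕ) (j : Fin s) (m : ℕ) :
    ∑ i, Function.update v j m i + v j = ∑ i, v i + m := by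
  rw [Finset.sum_update_of_mem (Finset.mem_univ j)]
  have h : ∑ i, v i = v j + ∑ i ∈ Finset.univ \ {j}, v i := by
    rw [← Finset.sum_update_of_mem (Finset.mem_univ j) v (v j)]
    exact (Finset.sum_congr rfl fun i _ => by
      by_cases h : i = j
      · subst h; simp
      · rw [Function.update_of_ne h]).symm
  omega

lemma F_rec (s : ℕ) (z : ℤ) (k : ℕ) :
    F s (z + 1) (k + 1) = F s z (k + 1) + ∑ j : Fin s, F s (z - ((j : ℕ) : ℤ)) k := by
  have step1 : F s (z + 1) (k + 1) = F s z (k + 1) +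
      ∑ v ∈ Finset.Nat.antidiagonalTuple s (k + 1),
        (Nat.multinomial Finset.univ v : ℤ) * ichoose (z + ((k : ℤ) + 1) - W s v) k := by
    unfold F
    rw [← Finset.sum_add_distrib]
    apply Finset.sum_congr rfl
    intro v _
    rw [← mul_add]
    congr 1
    have h : z + 1 + ((k + 1 : ℕ) : ℤ) - W s v = (z + ((k : ℤ) + 1) - W s v) + 1 := by
      push_cast; ring
    rw [h, ichoose_succ]
    push_cast
    ring_nf
  rw [step1]
  congr 1
  have step2 : ∀ v ∈ Finset.Nat.antidiagonalTuple s (k + 1),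
      (Nat.multinomial Finset.univ v : ℤ) * ichoose (z + ((k : ℤ) + 1) - W s v) k =
      ∑ j : Fin s, if 1 ≤ v j then
        (Nat.multinomial Finset.univ (Function.update v j (v j - 1)) : ℤ) *
          ichoose (z + ((k : ℤ) + 1) - W s v) k else 0 := by
    intro v hv
    rw [Finset.Nat.mem_antidiagonalTuple] at hv
    rw [← mult_rec v hv]
    push_cast
    rw [Finset.sum_mul]
    apply Finset.sum_congr rfl
    intro j _
    rw [ite_mul, zero_mul]
  rw [Finset.sum_congr rfl step2, Finset.sum_comm]
  apply Finset.sum_congr rfl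
  intro j _
  rw [← Finset.sum_filter]
  unfold F
  apply Finset.sum_nbij' (fun v => Function.update v j (v j - 1))
    (fun w => Function.update w j (w j + 1))
  · intro v hv
    rw [Finset.mem_filter, Finset.Nat.mem_antidiagonalTuple] at hv
    rw [Finset.Nat.mem_antidiagonalTuple]
    exact sum_update_pred v j hv.2 hv.1
  · intro w hw
    rw [Finset.Nat.mem_antidiagonalTuple] at hw
    rw [Finset.mem_filter, Finset.Nat.mem_antidiagonalTuple]
    constructor
    · have := sum_update_aux w j (w j + 1)
      omega
    · simp
  · intro v hv
    rw [Finset.mem_filter] at hv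
    ext i
    by_cases h : i = j
    · subst h
      simp only [Function.update_self]
      have : v i - 1 + 1 = v i := by omega
      rw [this]
    · rw [Function.update_of_ne h, Function.update_of_ne h]
  · intro w _
    ext i
    by_cases h : i = j
    · subst h
      simp only [Function.update_self]
      have : w i + 1 - 1 = w i := by omega
      rw [this]
    · rw [Function.update_of_ne h, Function.update_of_ne h]
  · intro v hv
    rw [Finset.mem_filter] at hv
    congr 1
    have hW := W_update v j hv.2
    rw [hW]
    push_cast
    ring

lemma quasi_neg (s m : ℕ) (t : ℤ) (h : t < 0) : quasi s m t = 0 := by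
  cases m with
  | zero => rw [quasi, if_neg (by omega)]
  | succ m => rw [quasi, if_pos (Or.inl h)]

lemma quasi_eq_F (s : ℕ) : ∀ n k : ℕ, quasi s n (k : ℤ) = F s (n : ℤ) k := by
  intro n
  induction n using Nat.strong_induction_on with
  | _ n ih =>
    match n with
    | 0 =>
      intro k
      match k with
      | 0 => rw [quasi]; norm_num [F_zero, ichoose]
      | k+1 =>
        rw [Nat.cast_zero, F_vanish s 0 (k+1) (by omega), quasi, if_neg (by push_cast; omega)]
    | n+1 =>
      intro k
      by_cases hk : k ≤ n + 1
      · rw [quasi, if_neg (by push_cast; omega)]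
        cases k with
        | zero =>
          rw [Nat.cast_zero]
          have hz : ∀ j ∈ Finset.range s,
              (if j ≤ n then quasi s (n - j) ((0 : ℤ) - 1) else 0) = 0 := by
            intro j _
            split
            · exact quasi_neg s (n - j) _ (by omega)
            · rfl
          rw [Finset.sum_congr rfl hz, Finset.sum_const_zero, add_zero]
          have hn := ih n (by omega) 0
          rw [Nat.cast_zero] at hn
          rw [hn, F_zero, F_zero]
          unfold ichoose
          rw [if_neg (by omega), if_neg (by push_cast; omega)]
          simp
        | succ k' =>
          have hterm : ∀ j ∈ Finset.range s,
              (if j ≤ n then quasi s (n - j) (((k' + 1 : ℕ) : ℤ) - 1) else 0) =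
                F s ((n : ℤ) - (j : ℤ)) k' := by
            intro j _
            by_cases hj : j ≤ n
            · rw [if_pos hj]
              have h1 : ((k' + 1 : ℕ) : ℤ) - 1 = ((k' : ℕ) : ℤ) := by push_cast; ring
              rw [h1, ih (n - j) (by omega) k']
              congr 1
              omega
            · rw [if_neg hj, F_vanish s _ k' (by omega)]
          rw [Finset.sum_congr rfl hterm, ih n (by omega) (k' + 1)]
          have hr : ∑ j ∈ Finset.range s, F s ((n : ℤ) - (j : ℤ)) k' =
              ∑ j : Fin s, F s ((n : ℤ) - ((j : ℕ) : ℤ)) k' := by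
            rw [Finset.sum_range fun j => F s ((n : ℤ) - (j : ℤ)) k']
          rw [hr]
          have h2 : ((n + 1 : ℕ) : ℤ) = (n : ℤ) + 1 := by push_cast; ring
          rw [h2, F_rec]
      · rw [quasi, if_pos (by push_cast; omega), F_vanish s _ k (by push_cast; omega)]

/-- Multinomial explicit formula: for `0 ≤ k ≤ n`,
`C_s(n,k) = ∑_{k_1+⋯+k_s=k} multinomial(k; k_1,…,k_s) · C(n + k - ∑_{i=1}^{s} i k_i, k)`,
the sum running over all `s`-tuples of natural numbers summing to `k`. -/
theorem quasi_multinomial_explicit (s n k : ℕ) (hs : 1 ≤ s) (hk : k ≤ n) :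
    quasi s n (k : ℤ) =
      ∑ᶠ v : Fin s → ℕ,
        if (∑ i, v i) = k then
          (Nat.multinomial Finset.univ v : ℤ) *
            ichoose ((n : ℤ) + k - ∑ i : Fin s, (((i : ℕ) : ℤ) + 1) * (v i : ℤ)) k
        else 0 := by

  rw [quasi_eq_F s n k]
  rw [finsum_eq_sum_of_support_subset _ (s := Finset.Nat.antidiagonalTuple s k)
    (by
      intro v hv
      simp only [Function.mem_support, ne_eq] at hv
      simp only [Finset.mem_coe, Finset.Nat.mem_antidiagonalTuple]
      by_contra h
      exact hv (if_neg h))]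
  unfold F
  apply Finset.sum_congr rfl
  intro v hv
  rw [Finset.Nat.mem_antidiagonalTuple] at hv
  rw [if_pos hv]
  rfl
end

section
/- Let α ≥ 1 and β be integers with 0 ≤ β < α, and let r be an integer with r + α > 0. Define T^{(α,β,r)}_{m,s} := 0 for m ≤ 0 and T^{(α,β,r)}_{n+1,s} := ∑_{k ≥ 0} C_s(n - r k, β + α k) for n ≥ 0. Then in the ring of formal power series ℤ[[x]] one has ((1-x)^{α} - x^{r+α}(1 + x + ⋯ + x^{s-1})^{α}) · ∑_{n ≥ 0} T^{(α,β,r)}_{n+1,s} x^{n} = (1-x)^{α-β-1} (x + x^{2} + ⋯ + x^{s})^{β}. -/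
/-- `C_s(n,k)` extended by zero to negative `n`. -/
def quasiZ (s : ℕ) (n k : ℤ) : ℤ :=
  if n < 0 then 0 else quasi s n.toNat k

/-- The transversal sums `T^{(α,β,r)}_{m,s}`: zero for `m ≤ 0`, and
`T^{(α,β,r)}_{n+1,s} = ∑_{k ≥ 0} C_s(n - r k, β + α k)` for `n ≥ 0`
(a finite sum since `α + r > 0`). -/
noncomputable def Ttr (s α β : ℕ) (r : ℤ) (m : ℤ) : ℤ :=
  if m ≤ 0 then 0 else ∑ᶠ k : ℕ, quasiZ s ((m - 1) - r * k) ((β : ℤ) + (α : ℤ) * k)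

open PowerSeries
open Finset hiding mk

lemma quasi_eq_zero (s n : ℕ) (k : ℤ) (h : k < 0 ∨ (n : ℤ) < k) : quasi s n k = 0 := by
  cases n with
  | zero => rw [quasi, if_neg (by omega)]
  | succ n => rw [quasi, if_pos (by push_cast at h ⊢; omega)]

lemma quasi_succ (s n : ℕ) (k : ℤ) :
    quasi s (n + 1) k =
      quasi s n k + ∑ j ∈ range s, if j ≤ n then quasi s (n - j) (k - 1) else 0 := by
  rw [quasi, ite_eq_right_iff.mpr]
  intro h
  rw [quasi_eq_zero s n k (by omega), sum_eq_zero, add_zero]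
  intro j _
  split_ifs
  · exact quasi_eq_zero s (n - j) (k - 1) (by omega)
  · rfl

noncomputable def quasiSeries (s : ℕ) (k : ℤ) : ℤ⟦X⟧ := mk fun n => quasi s n k

lemma one_sub_X_mul_quasiSeries (s : ℕ) (k : ℤ) :
    (1 - X) * quasiSeries s k =
      X * (∑ i ∈ range s, X ^ i) * quasiSeries s (k - 1) + if k = 0 then 1 else 0 := by
  ext n
  cases n with
  | zero => simp [quasiSeries, quasi]
  | succ n =>
    rw [sub_mul, one_mul, map_sub, map_add, mul_assoc, coeff_succ_X_mul, coeff_succ_X_mul,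
      sum_mul, map_sum]
    simp only [quasiSeries, coeff_mk, coeff_X_pow_mul', quasi_succ]
    split_ifs <;> simp

lemma quasiSeries_natCast (s k : ℕ) :
    quasiSeries s k = X ^ k * (∑ i ∈ range s, X ^ i) ^ k * mk 1 ^ (k + 1) := by
  have hinv (f : ℤ⟦X⟧) : f = mk 1 * ((1 - X) * f) := by
    rw [← mul_assoc, mk_one_mul_one_sub_eq_one, one_mul]
  induction k with
  | zero =>
    have hneg : quasiSeries s (-1) = 0 := by ext n; simp [quasiSeries, quasi_eq_zero]
    rw [hinv (quasiSeries s _), one_sub_X_mul_quasiSeries]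
    simp [hneg]
  | succ k ih =>
    rw [hinv (quasiSeries s _), one_sub_X_mul_quasiSeries, Nat.cast_succ, add_sub_cancel_right,
      if_neg (by omega), add_zero, ih]
    ring

lemma quasiZ_eq_coeff (s m d n : ℕ) :
    quasiZ s ((n : ℤ) + m - d) m =
      coeff n (X ^ d * (∑ i ∈ range s, X ^ i) ^ m * mk 1 ^ (m + 1)) := by
  rw [mul_assoc, coeff_X_pow_mul', quasiZ]
  split_ifs
  · omega
  · rfl
  · rw [show ((n : ℤ) + m - d).toNat = n - d + m by omega, ← coeff_mk _ (fun j => quasi s j m),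
      ← quasiSeries, quasiSeries_natCast, mul_assoc, coeff_X_pow_mul]
  · exact quasi_eq_zero s _ m (Or.inr (by omega))

lemma sum_Icc_one_pow_eq_mul_sum_range_pow {R : Type*} [Semiring R] (x : R) (n : ℕ) :
    ∑ i ∈ Icc 1 n, x ^ i = x * ∑ i ∈ range n, x ^ i := by
  induction n with
  | zero => simp
  | succ n ih => rw [sum_Icc_succ_top (by omega), ih, sum_range_succ, mul_add, pow_succ']

section Transversal

variable (s α β e : ℕ) (r : ℤ)

lemma quasiZ_transversal_eq_coeff (he : (e : ℤ) = r + α) (n k : ℕ) :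
    quasiZ s (n - r * k) (β + α * k) =
      coeff n (X ^ β * (∑ i ∈ range s, X ^ i) ^ β * mk 1 ^ (β + 1) *
        (X ^ e * (∑ i ∈ range s, X ^ i) ^ α * mk 1 ^ α) ^ k) := by
  have h := quasiZ_eq_coeff s (β + α * k) (β + e * k) n
  push_cast at h
  rw [show (n : ℤ) - r * k = n + (β + α * k) - (β + e * k) by rw [he]; ring, h]
  ring_nf

lemma X_pow_dvd_Ttr_series_sub_geom_sum (he : (e : ℤ) = r + α) (he0 : 0 < e) (N : ℕ) :
    X ^ N ∣ mk (fun n => Ttr s α β r ((n : ℤ) + 1)) -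
      X ^ β * (∑ i ∈ range s, X ^ i) ^ β * mk 1 ^ (β + 1) *
        ∑ k ∈ range N, (X ^ e * (∑ i ∈ range s, X ^ i) ^ α * mk 1 ^ α) ^ k := by
  have hXu : X ∣ X ^ e * (∑ i ∈ range s, X ^ i) ^ α * (mk 1 : ℤ⟦X⟧) ^ α :=
    dvd_mul_of_dvd_left (dvd_mul_of_dvd_left (dvd_pow_self X he0.ne') _) _
  refine X_pow_dvd_iff.mpr fun n hn => ?_
  rw [map_sub, coeff_mk, Ttr, if_neg (by omega), add_sub_cancel_right, mul_sum, map_sum,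
    sub_eq_zero]
  simp_rw [quasiZ_transversal_eq_coeff s α β e r he n]
  apply finsum_eq_sum_of_support_subset
  intro k hk
  by_contra hkN
  exact hk (X_pow_dvd_iff.mp (dvd_mul_of_dvd_right (pow_dvd_pow_of_dvd hXu k) _) n
    (by simp at hkN; omega))

end Transversal

lemma one_sub_mul_eq_of_X_pow_dvd_sub_geom_sum {R : Type*} [CommRing R] {f c u : R⟦X⟧}
    (hu : X ∣ u) (hf : ∀ N, X ^ N ∣ f - c * ∑ k ∈ range N, u ^ k) : (1 - u) * f = c := by
  ext n
  have hdiff : X ^ (n + 1) ∣ (1 - u) * f - c := by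
    have : (1 - u) * f - c =
        (1 - u) * (f - c * ∑ k ∈ range (n + 1), u ^ k) - c * u ^ (n + 1) := by
      linear_combination c * mul_neg_geom_sum u (n + 1)
    rw [this]
    exact dvd_sub (dvd_mul_of_dvd_right (hf _) _) (dvd_mul_of_dvd_right (pow_dvd_pow_of_dvd hu _) _)
  simpa [sub_eq_zero] using X_pow_dvd_iff.mp hdiff n (lt_add_one n)

theorem transversal_generating_function_general (s α β : ℕ) (r : ℤ) (hβ : β < α) (hr : 0 < r + α) :
    ((1 - PowerSeries.X : PowerSeries ℤ) ^ α -
        (PowerSeries.X : PowerSeries ℤ) ^ ((r + α).toNat) *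
          (∑ i ∈ Finset.range s, (PowerSeries.X : PowerSeries ℤ) ^ i) ^ α) *
        PowerSeries.mk (fun n => Ttr s α β r ((n : ℤ) + 1)) =
      (1 - PowerSeries.X : PowerSeries ℤ) ^ (α - β - 1) *
        (∑ i ∈ Finset.Icc 1 s, (PowerSeries.X : PowerSeries ℤ) ^ i) ^ β := by
  obtain ⟨e, he⟩ : ∃ e : ℕ, (e : ℤ) = r + α := ⟨_, Int.toNat_of_nonneg hr.le⟩
  rw [show (r + α).toNat = e by omega]
  set Q := ∑ i ∈ range s, (X : ℤ⟦X⟧) ^ i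
  set c := X ^ β * Q ^ β * mk 1 ^ (β + 1)
  set u := X ^ e * Q ^ α * mk 1 ^ α
  have hunit (m : ℕ) : (1 - X : ℤ⟦X⟧) ^ m * mk 1 ^ m = 1 := by
    rw [← mul_pow, mul_comm, mk_one_mul_one_sub_eq_one, one_pow]
  have hD : (1 - X) ^ α - X ^ e * Q ^ α = (1 - X) ^ α * (1 - u) := by
    linear_combination X ^ e * Q ^ α * hunit α
  have hRHS : (1 - X) ^ (α - β - 1) * (∑ i ∈ Icc 1 s, X ^ i) ^ β = (1 - X) ^ α * c := by
    have hsplit : (1 - X : ℤ⟦X⟧) ^ α = (1 - X) ^ (α - β - 1) * (1 - X) ^ (β + 1) := by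
      rw [← pow_add]; congr 1; omega
    rw [hsplit, sum_Icc_one_pow_eq_mul_sum_range_pow, mul_pow]
    linear_combination -(1 - X) ^ (α - β - 1) * X ^ β * Q ^ β * hunit (β + 1)
  have hXu : X ∣ u := dvd_mul_of_dvd_left (dvd_mul_of_dvd_left (dvd_pow_self X (by omega)) _) _
  rw [hD, hRHS, mul_assoc, one_sub_mul_eq_of_X_pow_dvd_sub_geom_sum hXu
    (X_pow_dvd_Ttr_series_sub_geom_sum s α β e r he (by omega))]

/-- Generating function of the transversal sums: in `ℤ[[x]]`,
`((1-x)^α - x^{r+α} (1 + x + ⋯ + x^{s-1})^α) ⬝ ∑_{n≥0} T^{(α,β,r)}_{n+1,s} x^n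
  = (1-x)^{α-β-1} (x + x² + ⋯ + x^s)^β`. -/
theorem transversal_generating_function (s α β : ℕ) (r : ℤ) (hs : 1 ≤ s)
    (hα : 1 ≤ α) (hβ : β < α) (hr : 0 < r + α) :
    ((1 - PowerSeries.X : PowerSeries ℤ) ^ α -
        (PowerSeries.X : PowerSeries ℤ) ^ ((r + α).toNat) *
          (∑ i ∈ Finset.range s, (PowerSeries.X : PowerSeries ℤ) ^ i) ^ α) *
        PowerSeries.mk (fun n => Ttr s α β r ((n : ℤ) + 1)) =
      (1 - PowerSeries.X : PowerSeries ℤ) ^ (α - β - 1) *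
        (∑ i ∈ Finset.Icc 1 s, (PowerSeries.X : PowerSeries ℤ) ^ i) ^ β :=
  transversal_generating_function_general s α β r hβ hr
end
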